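/- Let M be a set with an action of the circle group (the group of unit complex numbers), and let S³ = {(z₁, z₂) ∈ ℂ² : |z₁|² + |z₂|² = 1}. Form the quotient Q* = (M × S³)/∼ of M × S³ by the circle action τ · (m, (z₁, z₂)) = (τ·m, (τ·z₁, τ⁻¹·z₂)). Then the formula ζ · [m, (z₁, z₂)] = [ζ·m, (z₁, ζ⁻¹·z₂)] descends to a well-defined action of the circle group on Q*, and a class [m, (z₁, z₂)] is a fixed point of this action if and only if z₁ = 0, or (z₂ = 0 and m is a fixed point of the action on M). -/

import Mathlib

/-- The unit sphere `S³ ⊆ ℂ²`. -/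
def SphereS3 : Type := {z : ℂ × ℂ // ‖z.1‖ ^ 2 + ‖z.2‖ ^ 2 = 1}

/-- Two points of `M × S³` are related iff they differ by the twisted circle
action `τ · (m, (z₁, z₂)) = (τ·m, (τ·z₁, τ⁻¹·z₂))`. -/
def antiHopfRel (M : Type*) [SMul Circle M] (a b : M × SphereS3) : Prop :=
  ∃ τ : Circle, b.1 = τ • a.1 ∧ b.2.val.1 = (τ : ℂ) * a.2.val.1 ∧
    b.2.val.2 = ((τ⁻¹ : Circle) : ℂ) * a.2.val.2

/-- The quotient `Q* = (M × S³)/∼` of the construction `γ*`. -/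
def AntiHopfQuot (M : Type*) [SMul Circle M] : Type _ := Quot (antiHopfRel M)

/-- The class of `(m, (z₁, z₂))` in `Q*`. -/
def antiHopfMk (M : Type*) [SMul Circle M] (m : M) (z₁ z₂ : ℂ)
    (h : ‖z₁‖ ^ 2 + ‖z₂‖ ^ 2 = 1) : AntiHopfQuot M :=
  Quot.mk (antiHopfRel M) (m, ⟨(z₁, z₂), h⟩)

/-! If `z₁ ≠ 0`, the only twist `τ` with `τ z₁ = z₁` is `τ = 1`, so `[m, z₁, z₂]` is fixed iff
`ζ • m = m` and `ζ⁻¹ z₂ = z₂` for every `ζ`; taking `ζ = -1` forces `z₂ = 0`. If `z₁ = 0`, the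
twist by `τ = ζ⁻¹` undoes the action of `ζ`, so the class is fixed. -/

theorem Circle.coe_mul_eq_self_iff {τ : Circle} {z : ℂ} : (τ : ℂ) * z = z ↔ τ = 1 ∨ z = 0 := by
  rw [mul_left_eq_self₀, Circle.coe_eq_one]

theorem Circle.eq_zero_of_forall_coe_mul_eq_self {z : ℂ} (h : ∀ ζ : Circle, (ζ : ℂ) * z = z) :
    z = 0 :=
  (Circle.coe_mul_eq_self_iff.1 (h (-1))).resolve_left (Circle.neg_ne_self 1)

def SphereS3.rotateSnd (ζ : Circle) (z : SphereS3) : SphereS3 :=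
  ⟨(z.val.1, (ζ : ℂ) * z.val.2), by simpa [Circle.norm_coe] using z.property⟩

theorem SphereS3.rotateSnd_one (z : SphereS3) : z.rotateSnd 1 = z :=
  Subtype.ext <| Prod.ext rfl (one_mul _)

theorem SphereS3.rotateSnd_mul (ζ ξ : Circle) (z : SphereS3) :
    z.rotateSnd (ζ * ξ) = (z.rotateSnd ξ).rotateSnd ζ :=
  Subtype.ext <| Prod.ext rfl (mul_assoc _ _ _)

section

variable {M : Type*} [MulAction Circle M]

theorem antiHopfRel_equivalence : Equivalence (antiHopfRel M) where
  refl _ := ⟨1, by simp⟩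
  symm := by
    rintro a b ⟨τ, h₁, h₂, h₃⟩
    refine ⟨τ⁻¹, by rw [h₁, inv_smul_smul], ?_, ?_⟩
    · rw [h₂, Circle.coe_inv, inv_mul_cancel_left₀ (Circle.coe_ne_zero τ)]
    · rw [h₃, inv_inv, Circle.coe_inv, mul_inv_cancel_left₀ (Circle.coe_ne_zero τ)]
  trans := by
    rintro a b c ⟨τ, h₁, h₂, h₃⟩ ⟨σ, g₁, g₂, g₃⟩
    refine ⟨σ * τ, by rw [g₁, h₁, mul_smul], ?_, ?_⟩
    · rw [g₂, h₂, Circle.coe_mul, mul_assoc]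
    · rw [g₃, h₃, mul_inv, Circle.coe_mul, mul_assoc]

noncomputable def antiHopfSMul (ζ : Circle) (p : M × SphereS3) : M × SphereS3 :=
  (ζ • p.1, p.2.rotateSnd ζ⁻¹)

theorem antiHopfRel_antiHopfSMul (ζ : Circle) {a b : M × SphereS3} (h : antiHopfRel M a b) :
    antiHopfRel M (antiHopfSMul ζ a) (antiHopfSMul ζ b) := by
  obtain ⟨τ, h₁, h₂, h₃⟩ := h
  refine ⟨τ, ?_, h₂, ?_⟩
  · change ζ • b.1 = τ • ζ • a.1
    rw [h₁, smul_comm]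
  · change _ * b.2.val.2 = _ * (_ * a.2.val.2)
    rw [h₃, mul_left_comm]

noncomputable instance : MulAction Circle (AntiHopfQuot M) where
  smul ζ := Quot.map (antiHopfSMul ζ) fun _ _ ↦ antiHopfRel_antiHopfSMul ζ
  one_smul := Quot.ind fun p ↦ congrArg (Quot.mk _) <| by
    rw [antiHopfSMul, one_smul, inv_one, SphereS3.rotateSnd_one]
  mul_smul ζ ξ := Quot.ind fun p ↦ congrArg (Quot.mk _) <| Prod.ext (mul_smul ζ ξ p.1) <| by
    change p.2.rotateSnd (ζ * ξ)⁻¹ = (p.2.rotateSnd ξ⁻¹).rotateSnd ζ⁻¹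
    rw [mul_inv, SphereS3.rotateSnd_mul]

theorem smul_antiHopfMk (ζ : Circle) (m : M) (z₁ z₂ : ℂ) (h : ‖z₁‖ ^ 2 + ‖z₂‖ ^ 2 = 1)
    (h' : ‖z₁‖ ^ 2 + ‖((ζ⁻¹ : Circle) : ℂ) * z₂‖ ^ 2 = 1) :
    ζ • antiHopfMk M m z₁ z₂ h = antiHopfMk M (ζ • m) z₁ (((ζ⁻¹ : Circle) : ℂ) * z₂) h' :=
  rfl

theorem smul_antiHopfMk_eq_self_iff (ζ : Circle) (m : M) (z₁ z₂ : ℂ)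
    (h : ‖z₁‖ ^ 2 + ‖z₂‖ ^ 2 = 1) :
    ζ • antiHopfMk M m z₁ z₂ h = antiHopfMk M m z₁ z₂ h ↔
      ∃ τ : Circle, m = τ • ζ • m ∧ z₁ = (τ : ℂ) * z₁ ∧
        z₂ = ((τ⁻¹ : Circle) : ℂ) * (((ζ⁻¹ : Circle) : ℂ) * z₂) :=
  antiHopfRel_equivalence.quot_mk_eq_iff _ _

theorem antiHopfMk_mem_fixedPoints_iff (m : M) (z₁ z₂ : ℂ) (h : ‖z₁‖ ^ 2 + ‖z₂‖ ^ 2 = 1) :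
    antiHopfMk M m z₁ z₂ h ∈ MulAction.fixedPoints Circle (AntiHopfQuot M) ↔
      z₁ = 0 ∨ (z₂ = 0 ∧ m ∈ MulAction.fixedPoints Circle M) := by
  simp only [MulAction.mem_fixedPoints, smul_antiHopfMk_eq_self_iff]
  constructor
  · intro hfix
    refine or_iff_not_imp_left.2 fun hz₁ ↦ ?_
    have hfix' : ∀ ζ : Circle, m = ζ • m ∧ z₂ = ((ζ⁻¹ : Circle) : ℂ) * z₂ := fun ζ ↦ by
      obtain ⟨τ, hm, h₁, h₂⟩ := hfix ζ
      obtain rfl : τ = 1 := (Circle.coe_mul_eq_self_iff.1 h₁.symm).resolve_right hz₁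
      exact ⟨by simpa using hm, by simpa using h₂⟩
    exact ⟨Circle.eq_zero_of_forall_coe_mul_eq_self fun ζ ↦ by simpa using (hfix' ζ⁻¹).2.symm,
      fun ζ ↦ (hfix' ζ).1.symm⟩
  · rintro (rfl | ⟨rfl, hm⟩) ζ
    · exact ⟨ζ⁻¹, (inv_smul_smul ζ m).symm, (mul_zero _).symm, by simp⟩
    · exact ⟨1, by rw [one_smul, hm], (one_mul _).symm, by simp⟩

end

/-- The formula `ζ · [m, (z₁, z₂)] = [ζ·m, (z₁, ζ⁻¹·z₂)]` descends to a
well-defined circle action on `Q*`, and a class `[m, (z₁, z₂)]` is fixed by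
this action iff `z₁ = 0`, or (`z₂ = 0` and `m` is fixed). -/
theorem gammaStarM_action_fixed_points (M : Type*) [MulAction Circle M] :
    ∃ act : Circle → AntiHopfQuot M → AntiHopfQuot M,
      (∀ q, act 1 q = q) ∧
      (∀ (ζ ξ : Circle) q, act (ζ * ξ) q = act ζ (act ξ q)) ∧
      (∀ (ζ : Circle) (m : M) (z₁ z₂ : ℂ)
          (h : ‖z₁‖ ^ 2 + ‖z₂‖ ^ 2 = 1)
          (h' : ‖z₁‖ ^ 2 + ‖((ζ⁻¹ : Circle) : ℂ) * z₂‖ ^ 2 = 1),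
        act ζ (antiHopfMk M m z₁ z₂ h) =
          antiHopfMk M (ζ • m) z₁ (((ζ⁻¹ : Circle) : ℂ) * z₂) h') ∧
      (∀ (m : M) (z₁ z₂ : ℂ)
          (h : ‖z₁‖ ^ 2 + ‖z₂‖ ^ 2 = 1),
        (∀ ζ : Circle, act ζ (antiHopfMk M m z₁ z₂ h) = antiHopfMk M m z₁ z₂ h) ↔
          (z₁ = 0 ∨ (z₂ = 0 ∧ ∀ τ : Circle, τ • m = m))) :=
  ⟨(· • ·), one_smul Circle, mul_smul, smul_antiHopfMk, antiHopfMk_mem_fixedPoints_iff⟩
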